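/- arXiv:1803.02899 — 2 statements merged into one kernel-verified Lean document; each statement's English description precedes it below -/
import Mathlib

section
/- For a finite category C, the zeta function ζ_C, defined by ζ_C(x,y) = |C(x,y)|, satisfies e_C ζ_C e_C = ζ_C; that is, ζ_C lies in the corner algebra e_C M(C) e_C. -/
open CategoryTheory
open scoped Classical

universe u v

/-- Convolution product on the Möbius algebra of rational-valued functions
on pairs of objects of a finite category. -/
noncomputable def conv (C : Type u) [Category.{v} C] [Fintype C]
    (α β : C → C → ℚ) : C → C → ℚ :=
  fun x y => ∑ z : C, α x z * β z y

/-- The size of the isomorphism class of an object. -/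
noncomputable def isoCard (C : Type u) [Category.{v} C] [Fintype C] (x : C) : ℚ :=
  ((Finset.univ.filter fun z : C => Nonempty (x ≅ z)).card : ℚ)

/-- The idempotent `e_C` : `e_C(x,y) = 1/|[x]|` if `x ≅ y`, and `0` otherwise. -/
noncomputable def eFun (C : Type u) [Category.{v} C] [Fintype C] : C → C → ℚ :=
  fun x y => if Nonempty (x ≅ y) then 1 / isoCard C x else 0

/-- The zeta function of a finite category: `ζ_C(x,y) = |C(x,y)|`. -/
noncomputable def zeta (C : Type u) [Category.{v} C] [Fintype C]
    [∀ x y : C, Fintype (x ⟶ y)] : C → C → ℚ :=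
  fun x y => (Fintype.card (x ⟶ y) : ℚ)

/-- The Kronecker delta, the multiplicative identity of the Möbius algebra. -/
noncomputable def delta (C : Type u) [Category.{v} C] [Fintype C] : C → C → ℚ :=
  fun x y => if x = y then 1 else 0

/-!
`e_C` averages a function over isomorphism classes: `(e_C α)(x, y)` is the mean of `α(z, y)`
over `z ≅ x`, and symmetrically on the right. Since `|C(x, y)|` only depends on the
isomorphism classes of `x` and `y`, averaging on either side leaves `ζ_C` unchanged.
-/

section Corner

variable {C : Type u} [Category.{v} C] [Fintype C]

lemma isoCard_pos (x : C) : 0 < isoCard C x := by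
  unfold isoCard
  exact_mod_cast Finset.card_pos.mpr ⟨x, by simpa using ⟨Iso.refl x⟩⟩

lemma isoCard_congr {x y : C} (i : x ≅ y) : isoCard C x = isoCard C y := by
  unfold isoCard
  congr 2
  ext z
  simpa using ⟨fun ⟨j⟩ => ⟨i.symm ≪≫ j⟩, fun ⟨j⟩ => ⟨i ≪≫ j⟩⟩

lemma eFun_symm (x y : C) : eFun C x y = eFun C y x := by
  unfold eFun
  by_cases h : Nonempty (x ≅ y)
  · obtain ⟨i⟩ := h
    rw [if_pos ⟨i⟩, if_pos ⟨i.symm⟩, isoCard_congr i]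
  · rw [if_neg h, if_neg fun ⟨i⟩ => h ⟨i.symm⟩]

lemma sum_eFun_mul (x : C) (f : C → ℚ) (hf : ∀ z, (x ≅ z) → f z = f x) :
    ∑ z, eFun C x z * f z = f x := by
  have hterm : ∀ z, eFun C x z * f z = if Nonempty (x ≅ z) then f x / isoCard C x else 0 := by
    intro z
    unfold eFun
    split_ifs with h
    · rw [hf z (Classical.choice h), one_div_mul_eq_div]
    · rw [zero_mul]
  simp only [hterm]
  rw [Finset.sum_ite, Finset.sum_const_zero, add_zero, Finset.sum_const, nsmul_eq_mul]
  exact mul_div_cancel₀ (f x) (isoCard_pos x).ne'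

lemma conv_eFun_left (α : C → C → ℚ) (hα : ∀ {x x' : C}, (x ≅ x') → ∀ y, α x' y = α x y) :
    conv C (eFun C) α = α := by
  funext x y
  exact sum_eFun_mul x (α · y) fun _ i => hα i y

lemma conv_eFun_right (α : C → C → ℚ) (hα : ∀ {y y' : C}, (y ≅ y') → ∀ x, α x y' = α x y) :
    conv C α (eFun C) = α := by
  funext x y
  simp only [conv, eFun_symm _ y, mul_comm (α x _)]
  exact sum_eFun_mul y (α x ·) fun _ i => hα i x

variable [∀ x y : C, Fintype (x ⟶ y)]

lemma zeta_congr_left {x x' : C} (i : x ≅ x') (y : C) : zeta C x' y = zeta C x y :=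
  congrArg Nat.cast (Fintype.card_congr (i.symm.homCongr (Iso.refl y)))

lemma zeta_congr_right {y y' : C} (i : y ≅ y') (x : C) : zeta C x y' = zeta C x y :=
  congrArg Nat.cast (Fintype.card_congr ((Iso.refl x).homCongr i.symm))

end Corner

/-- the zeta function lies in the corner algebra `e_C M(C) e_C`,
i.e. `e_C ζ_C e_C = ζ_C`. -/
theorem zeta_mem_corner (C : Type u) [Category.{v} C] [Fintype C]
    [∀ x y : C, Fintype (x ⟶ y)] :
    conv C (eFun C) (conv C (zeta C) (eFun C)) = zeta C := by
  rw [conv_eFun_right (zeta C) zeta_congr_right, conv_eFun_left (zeta C) zeta_congr_left]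
end

section
/- If a finite category C has skeletal Möbius inversion with inverse ν_C of ζ_C in the corner algebra, then ν_C·𝟙 is the unique weighting on C that is constant on isomorphism classes of objects, and 𝟙·ν_C is the unique coweighting constant on isomorphism classes. -/
/-!
Read `conv` as matrix multiplication. Rows of `e` at isomorphic objects coincide, so
`ν = e (ν e)` makes `ν 𝟙` constant on isomorphism classes; `ζ (ν 𝟙) = e 𝟙 = 𝟙`; and an
iso-invariant weighting satisfies `k = e k = ν (ζ k) = ν 𝟙`. Since `e` is symmetric, the
coweighting half is the weighting half for the transposes `ζᵀ` and `νᵀ`.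
-/

open CategoryTheory
open scoped Classical

universe u v

/-- A weighting on a finite category: `Σ_y |C(x,y)| k(y) = 1` for all `x`. -/
def Weighting (C : Type u) [Category.{v} C] [Fintype C]
    [∀ x y : C, Fintype (x ⟶ y)] (k : C → ℚ) : Prop :=
  ∀ x : C, ∑ y : C, zeta C x y * k y = 1

/-- A coweighting on a finite category: `Σ_x k(x) |C(x,y)| = 1` for all `y`. -/
def Coweighting (C : Type u) [Category.{v} C] [Fintype C]
    [∀ x y : C, Fintype (x ⟶ y)] (k : C → ℚ) : Prop :=
  ∀ y : C, ∑ x : C, k x * zeta C x y = 1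

/-- A function on objects constant on isomorphism classes. -/
def IsoInvariant (C : Type u) [Category.{v} C] (k : C → ℚ) : Prop :=
  ∀ x y : C, Nonempty (x ≅ y) → k x = k y

open Matrix

section IsoClasses

variable {C : Type u} [Category.{v} C] [Fintype C]

lemma isoCard_eq_of_iso {x y : C} (h : Nonempty (x ≅ y)) : isoCard C x = isoCard C y := by
  obtain ⟨i⟩ := h
  unfold isoCard
  congr 3
  ext z
  exact ⟨fun ⟨j⟩ => ⟨i.symm ≪≫ j⟩, fun ⟨j⟩ => ⟨i ≪≫ j⟩⟩

lemma isoCard_ne_zero (x : C) : isoCard C x ≠ 0 := by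
  unfold isoCard
  exact_mod_cast (Finset.card_pos.2 ⟨x, by simpa using ⟨Iso.refl x⟩⟩).ne'

lemma eFun_row_eq_of_iso {x y : C} (h : Nonempty (x ≅ y)) : eFun C x = eFun C y := by
  obtain ⟨i⟩ := h
  ext z
  have hiff : Nonempty (x ≅ z) ↔ Nonempty (y ≅ z) :=
    ⟨fun ⟨j⟩ => ⟨i.symm ≪≫ j⟩, fun ⟨j⟩ => ⟨i ≪≫ j⟩⟩
  simp only [eFun, hiff, isoCard_eq_of_iso ⟨i⟩]

lemma eFun_transpose : (Matrix.of (eFun C))ᵀ = Matrix.of (eFun C) := by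
  ext x y
  have hiff : Nonempty (y ≅ x) ↔ Nonempty (x ≅ y) := ⟨fun ⟨i⟩ => ⟨i.symm⟩, fun ⟨i⟩ => ⟨i.symm⟩⟩
  simp only [transpose_apply, of_apply, eFun, hiff]
  split_ifs with h
  · rw [isoCard_eq_of_iso h]
  · rfl

lemma eFun_mulVec_of_isoInvariant {k : C → ℚ} (hk : IsoInvariant C k) :
    Matrix.of (eFun C) *ᵥ k = k := by
  ext x
  have hterm : ∀ z, eFun C x z * k z = if Nonempty (x ≅ z) then k x / isoCard C x else 0 := by
    intro z
    by_cases h : Nonempty (x ≅ z)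
    · simp [eFun, h, hk x z h, div_eq_inv_mul]
    · simp [eFun, h]
  simp only [mulVec, dotProduct, of_apply, hterm, Finset.sum_ite, Finset.sum_const_zero,
    add_zero, Finset.sum_const, nsmul_eq_mul]
  exact mul_div_cancel₀ _ (isoCard_ne_zero x)

lemma isoInvariant_eFun_mulVec (v : C → ℚ) : IsoInvariant C (Matrix.of (eFun C) *ᵥ v) := by
  intro x y h
  simp only [mulVec, dotProduct, of_apply, eFun_row_eq_of_iso h]

end IsoClasses

section SkeletalMoebiusInversion

variable {C : Type u} [Category.{v} C] [Fintype C] {Z ν : Matrix C C ℚ}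

lemma corner_transpose (hcorner : Matrix.of (eFun C) * (ν * Matrix.of (eFun C)) = ν) :
    Matrix.of (eFun C) * (νᵀ * Matrix.of (eFun C)) = νᵀ := by
  conv_rhs => rw [← hcorner]
  simp only [transpose_mul, eFun_transpose, Matrix.mul_assoc]

lemma isoInvariant_mulVec_of_corner (hcorner : Matrix.of (eFun C) * (ν * Matrix.of (eFun C)) = ν)
    (v : C → ℚ) : IsoInvariant C (ν *ᵥ v) := by
  rw [← hcorner, ← mulVec_mulVec]
  exact isoInvariant_eFun_mulVec _

lemma mulVec_mulVec_one_of_mul_eq_eFun (hl : Z * ν = Matrix.of (eFun C)) :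
    Z *ᵥ (ν *ᵥ 1) = 1 := by
  rw [mulVec_mulVec, hl, eFun_mulVec_of_isoInvariant fun _ _ _ => rfl]

lemma eq_mulVec_one_of_mul_eq_eFun (hr : ν * Z = Matrix.of (eFun C)) {k : C → ℚ}
    (hk : Z *ᵥ k = 1) (hinv : IsoInvariant C k) : k = ν *ᵥ 1 :=
  calc k = Matrix.of (eFun C) *ᵥ k := (eFun_mulVec_of_isoInvariant hinv).symm
    _ = ν *ᵥ (Z *ᵥ k) := by rw [mulVec_mulVec, hr]
    _ = ν *ᵥ 1 := by rw [hk]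

lemma mulVec_one_unique_isoInvariant_solution
    (hcorner : Matrix.of (eFun C) * (ν * Matrix.of (eFun C)) = ν)
    (hl : Z * ν = Matrix.of (eFun C)) (hr : ν * Z = Matrix.of (eFun C)) :
    Z *ᵥ (ν *ᵥ 1) = 1 ∧ IsoInvariant C (ν *ᵥ 1) ∧
      ∀ k : C → ℚ, Z *ᵥ k = 1 → IsoInvariant C k → k = ν *ᵥ 1 :=
  ⟨mulVec_mulVec_one_of_mul_eq_eFun hl, isoInvariant_mulVec_of_corner hcorner 1,
    fun _ hk hinv => eq_mulVec_one_of_mul_eq_eFun hr hk hinv⟩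

end SkeletalMoebiusInversion

section Zeta

variable {C : Type u} [Category.{v} C] [Fintype C] [∀ x y : C, Fintype (x ⟶ y)]

lemma weighting_iff_mulVec (k : C → ℚ) : Weighting C k ↔ Matrix.of (zeta C) *ᵥ k = 1 := by
  rw [funext_iff]; rfl

lemma coweighting_iff_transpose_mulVec (k : C → ℚ) :
    Coweighting C k ↔ (Matrix.of (zeta C))ᵀ *ᵥ k = 1 := by
  rw [mulVec_transpose, funext_iff]; rfl

end Zeta

lemma sum_apply_right_eq_mulVec_one {C : Type u} [Fintype C] (ν : C → C → ℚ) :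
    (fun x => ∑ y : C, ν x y) = Matrix.of ν *ᵥ 1 := by
  ext x; simp [mulVec, dotProduct]

lemma sum_apply_left_eq_transpose_mulVec_one {C : Type u} [Fintype C] (ν : C → C → ℚ) :
    (fun y => ∑ x : C, ν x y) = (Matrix.of ν)ᵀ *ᵥ 1 := by
  ext y; simp [mulVec, dotProduct]

/-- if `C` has skeletal Möbius inversion with inverse `ν_C`, then
`ν_C·𝟙` is the unique weighting on `C` constant on isomorphism classes, and
`𝟙·ν_C` is the unique coweighting constant on isomorphism classes. -/
theorem skeletal_weighting_unique (C : Type u) [Category.{v} C] [Fintype C]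
    [∀ x y : C, Fintype (x ⟶ y)] (ν : C → C → ℚ)
    (hcorner : conv C (eFun C) (conv C ν (eFun C)) = ν)
    (hl : conv C (zeta C) ν = eFun C) (hr : conv C ν (zeta C) = eFun C) :
    (Weighting C (fun x => ∑ y : C, ν x y) ∧
      IsoInvariant C (fun x => ∑ y : C, ν x y) ∧
      ∀ k : C → ℚ, Weighting C k → IsoInvariant C k →
        k = fun x => ∑ y : C, ν x y) ∧
    (Coweighting C (fun y => ∑ x : C, ν x y) ∧
      IsoInvariant C (fun y => ∑ x : C, ν x y) ∧
      ∀ k : C → ℚ, Coweighting C k → IsoInvariant C k →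
        k = fun y => ∑ x : C, ν x y) := by
  have hcorner : Matrix.of (eFun C) * (Matrix.of ν * Matrix.of (eFun C)) = Matrix.of ν :=
    hcorner
  have hl : Matrix.of (zeta C) * Matrix.of ν = Matrix.of (eFun C) := hl
  have hr : Matrix.of ν * Matrix.of (zeta C) = Matrix.of (eFun C) := hr
  rw [sum_apply_right_eq_mulVec_one ν, sum_apply_left_eq_transpose_mulVec_one ν]
  simp only [weighting_iff_mulVec, coweighting_iff_transpose_mulVec]
  exact ⟨mulVec_one_unique_isoInvariant_solution hcorner hl hr,
    mulVec_one_unique_isoInvariant_solution (corner_transpose hcorner)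
      (by rw [← transpose_mul, hr, eFun_transpose]) (by rw [← transpose_mul, hl, eFun_transpose])⟩
end
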